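/- arXiv:2605.26072 — 3 statements merged into one kernel-verified Lean document; each statement's English description precedes it below -/
import Mathlib

section
/- Let σ > 0 and μ ∈ ℝ, and let Φ : ℝ → ℝ be continuous, strictly monotone increasing, satisfying Φ(−x) = 1 − Φ(x) for all x, and integrable with respect to the real Gaussian measure N(μ, σ²). Then ∫ Φ d N(μ, σ²) = 1/2 if and only if μ = 0. -/
open MeasureTheory ProbabilityTheory

/-- For `σ > 0`, `μ ∈ ℝ`, and `Φ : ℝ → ℝ` continuous, strictly increasing,
satisfying `Φ (-x) = 1 - Φ x`, and integrable w.r.t. the Gaussian `N(μ, σ²)`,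
we have `∫ Φ dN(μ, σ²) = 1/2` iff `μ = 0`. -/
theorem stmt4 (σ : ℝ) (hσ : 0 < σ) (μ : ℝ) (Φ : ℝ → ℝ)
    (hΦcont : Continuous Φ) (hΦmono : StrictMono Φ)
    (hΦsym : ∀ x : ℝ, Φ (-x) = 1 - Φ x)
    (hΦint : Integrable Φ (gaussianReal μ ⟨σ ^ 2, sq_nonneg σ⟩)) :
    ∫ x, Φ x ∂(gaussianReal μ ⟨σ ^ 2, sq_nonneg σ⟩) = 1 / 2 ↔ μ = 0 := by
  set v : NNReal := ⟨σ ^ 2, sq_nonneg σ⟩ with hv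
  set ν : Measure ℝ := gaussianReal 0 v with hν
  have hmapA : ν.map (· + μ) = gaussianReal μ v := by
    rw [hν, gaussianReal_map_add_const, zero_add]
  have hmapB : ν.map (fun x => μ - x) = gaussianReal μ v := by
    have hneg : ν.map (fun x => -x) = ν := by
      have := gaussianReal_map_const_mul (μ := 0) (v := v) (-1)
      simpa [hν, neg_one_mul, show (⟨(-1 : ℝ) ^ 2, sq_nonneg _⟩ : NNReal) = 1 by ext; norm_num]
        using this
    have : ν.map (fun x => μ - x) = (ν.map (fun x => -x)).map (· + μ) := by
      rw [Measure.map_map (by fun_prop) (by fun_prop)]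
      congr 1; ext x; simp [sub_eq_neg_add, add_comm]
    rw [this, hneg, hmapA]
  have hΦm : AEStronglyMeasurable Φ (gaussianReal μ v) := hΦcont.aestronglyMeasurable
  have hIA : Integrable (fun x => Φ (x + μ)) ν := by
    rw [← hmapA] at hΦint
    exact (integrable_map_measure hΦcont.aestronglyMeasurable (by fun_prop)).mp hΦint
  have hIB : Integrable (fun x => Φ (μ - x)) ν := by
    rw [← hmapB] at hΦint
    exact (integrable_map_measure hΦcont.aestronglyMeasurable (by fun_prop)).mp hΦint
  have hEA : ∫ x, Φ (x + μ) ∂ν = ∫ x, Φ x ∂(gaussianReal μ v) := by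
    rw [← hmapA, integral_map (by fun_prop) hΦcont.aestronglyMeasurable]
  have hEB : ∫ x, Φ (μ - x) ∂ν = ∫ x, Φ x ∂(gaussianReal μ v) := by
    rw [← hmapB, integral_map (by fun_prop) hΦcont.aestronglyMeasurable]
  -- the difference function
  have hIC : Integrable (fun x => Φ (x + μ) - Φ (x - μ)) ν := by
    have : (fun x => Φ (x + μ) - Φ (x - μ)) = fun x => Φ (x + μ) - (1 - Φ (μ - x)) := by
      ext x; rw [show x - μ = -(μ - x) by ring, hΦsym]
    rw [this]
    exact hIA.sub ((integrable_const 1).sub hIB)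
  have hkey : ∫ x, Φ x ∂(gaussianReal μ v)
      = 1 / 2 + (∫ x, Φ (x + μ) - Φ (x - μ) ∂ν) / 2 := by
    have h2 : (2 : ℝ) * ∫ x, Φ x ∂(gaussianReal μ v)
        = ∫ x, Φ (x + μ) + Φ (μ - x) ∂ν := by
      rw [integral_add hIA hIB, hEA, hEB]; ring
    have h3 : ∫ x, Φ (x + μ) + Φ (μ - x) ∂ν
        = ∫ x, 1 + (Φ (x + μ) - Φ (x - μ)) ∂ν := by
      congr 1; ext x
      rw [show x - μ = -(μ - x) by ring, hΦsym]; ring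
    rw [h3, integral_add (integrable_const 1) hIC, integral_const] at h2
    simp only [measure_univ, probReal_univ, ENNReal.toReal_one, smul_eq_mul, one_mul] at h2
    linarith
  have hmeas_univ : (0 : ENNReal) < ν Set.univ := by simp
  constructor
  · intro hint
    by_contra hμ
    have hint0 : ∫ x, Φ (x + μ) - Φ (x - μ) ∂ν = 0 := by
      rw [hint] at hkey; linarith
    rcases lt_or_gt_of_ne hμ with hlt | hgt
    · have hpos : ∀ x, 0 < Φ (x - μ) - Φ (x + μ) := fun x =>
        sub_pos.mpr (hΦmono (by linarith))
      have hIC' : Integrable (fun x => Φ (x - μ) - Φ (x + μ)) ν := by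
        have h := hIC.neg
        convert h using 1; ext x; simp
      have hsupp : (Function.support fun x => Φ (x - μ) - Φ (x + μ)) = Set.univ :=
        Set.eq_univ_of_forall fun x => (hpos x).ne'
      have := (integral_pos_iff_support_of_nonneg
        (fun x => (hpos x).le) hIC').mpr (by rw [hsupp]; exact hmeas_univ)
      have heq : ∫ x, Φ (x - μ) - Φ (x + μ) ∂ν = 0 := by
        rw [show (fun x => Φ (x - μ) - Φ (x + μ)) = fun x => -(Φ (x + μ) - Φ (x - μ)) by
          ext x; ring, integral_neg, hint0, neg_zero]
      rw [heq] at this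
      exact lt_irrefl 0 this
    · have hpos : ∀ x, 0 < Φ (x + μ) - Φ (x - μ) := fun x =>
        sub_pos.mpr (hΦmono (by linarith))
      have hsupp : (Function.support fun x => Φ (x + μ) - Φ (x - μ)) = Set.univ :=
        Set.eq_univ_of_forall fun x => (hpos x).ne'
      have := (integral_pos_iff_support_of_nonneg
        (fun x => (hpos x).le) hIC).mpr (by rw [hsupp]; exact hmeas_univ)
      rw [hint0] at this
      exact lt_irrefl 0 this
  · intro hμ
    subst hμ
    simp only [add_zero, sub_zero, sub_self, integral_zero] at hkey
    rw [hkey]; ring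
end

section
/- Fix q, w in the Euclidean space ℝ^d and σ₀ > 0, and define, for p ∈ ℝ^d, A = ‖w − q‖², B(p) = ‖w − p‖², S(p) = √(A² + B(p)²), and f(p) = (A − B(p))/(σ₀·S(p)). At any point p where S(p) ≠ 0, f is twice differentiable in p and its Hessian bilinear form satisfies, for all h, k ∈ ℝ^d: D²f(p)[h, k] = (2A/(σ₀·S³))·[ (2·T_p/S²)·⟪w − p, h⟫·⟪w − p, k⟫ − (A + B)·⟪h, k⟫ ], where T_p = 3·B·(A + B) − S². -/
open scoped RealInnerProductSpace

private lemma phi_deriv' (A σ₀ : ℝ) (hσ : σ₀ ≠ 0) (b : ℝ) (hb : A^2 + b^2 ≠ 0) :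
    HasDerivAt (fun b => (A - b)/(σ₀ * Real.sqrt (A^2+b^2)))
      (-A*(A+b)/(σ₀ * Real.sqrt (A^2+b^2)^3)) b := by
  have hnn : (0:ℝ) ≤ A^2 + b^2 := by positivity
  set s := Real.sqrt (A^2+b^2) with hs
  have hs2 : s^2 = A^2+b^2 := Real.sq_sqrt hnn
  have hsne : s ≠ 0 := by
    intro h0
    rw [h0] at hs2; simp at hs2; exact hb hs2.symm
  have hsq : HasDerivAt (fun b : ℝ => Real.sqrt (A^2+b^2)) (b/s) b := by
    have hin : HasDerivAt (fun b : ℝ => A^2+b^2) (2*b) b := by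
      simpa using ((hasDerivAt_pow 2 b).const_add (A^2))
    have := (Real.hasDerivAt_sqrt hb).comp b hin
    refine this.congr_deriv ?_
    symm
    field_simp
    ring
  have hnum : HasDerivAt (fun b : ℝ => A - b) (-1) b := by
    simpa using ((hasDerivAt_id b).const_sub A)
  have hden : HasDerivAt (fun b : ℝ => σ₀ * Real.sqrt (A^2+b^2)) (σ₀ * (b/s)) b :=
    hsq.const_mul σ₀
  have := hnum.div hden (mul_ne_zero hσ hsne)
  refine this.congr_deriv ?_
  symm
  rw [← hs]
  field_simp
  linear_combination hs2

private lemma phi2_deriv' (A σ₀ : ℝ) (hσ : σ₀ ≠ 0) (b : ℝ) (hb : A^2 + b^2 ≠ 0) :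
    HasDerivAt (fun b => -A*(A+b)/(σ₀ * Real.sqrt (A^2+b^2)^3))
      (A*(3*b*(A+b) - (A^2+b^2))/(σ₀ * Real.sqrt (A^2+b^2)^5)) b := by
  have hnn : (0:ℝ) ≤ A^2 + b^2 := by positivity
  set s := Real.sqrt (A^2+b^2) with hs
  have hs2 : s^2 = A^2+b^2 := Real.sq_sqrt hnn
  have hsne : s ≠ 0 := by
    intro h0
    rw [h0] at hs2; simp at hs2; exact hb hs2.symm
  have hsq : HasDerivAt (fun b : ℝ => Real.sqrt (A^2+b^2)) (b/s) b := by
    have hin : HasDerivAt (fun b : ℝ => A^2+b^2) (2*b) b := by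
      simpa using ((hasDerivAt_pow 2 b).const_add (A^2))
    have := (Real.hasDerivAt_sqrt hb).comp b hin
    refine this.congr_deriv ?_
    symm
    field_simp
    ring
  have hnum : HasDerivAt (fun b : ℝ => -A*(A+b)) (-A) b := by
    simpa using (((hasDerivAt_id b).const_add A).const_mul (-A))
  have hden : HasDerivAt (fun b : ℝ => σ₀ * Real.sqrt (A^2+b^2)^3)
      (σ₀ * (3 * s^2 * (b/s))) b := by
    simpa using ((hsq.pow 3).const_mul σ₀)
  have := hnum.div hden (by positivity)
  refine this.congr_deriv ?_
  symm
  rw [← hs, ← hs2]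
  field_simp
  ring

private lemma normsq_fderiv' {d : ℕ} (w p' : EuclideanSpace ℝ (Fin d)) :
    HasFDerivAt (fun x : EuclideanSpace ℝ (Fin d) => ‖w - x‖^2)
      ((2:ℝ) • (innerSL ℝ (p' - w))) p' := by
  have h1 : HasFDerivAt (fun x : EuclideanSpace ℝ (Fin d) => w - x)
      (-(ContinuousLinearMap.id ℝ (EuclideanSpace ℝ (Fin d)))) p' := by
    exact (hasFDerivAt_id (𝕜 := ℝ) p').const_sub w
  have h2 := h1.inner ℝ h1
  have h3 : (fun x : EuclideanSpace ℝ (Fin d) => ⟪w - x, w - x⟫) =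
      fun x => ‖w - x‖^2 := by
    funext x; exact real_inner_self_eq_norm_sq _
  rw [h3] at h2
  refine h2.congr_fderiv ?_
  symm
  ext k
  simp [real_inner_comm, inner_neg_right, inner_sub_left, mul_sub, sub_mul,
    Finset.sum_sub_distrib, mul_comm]
  rw [inner_sub_right, real_inner_comm k w, real_inner_comm k p']
  ring

private noncomputable def Mmap' (d : ℕ) :
    EuclideanSpace ℝ (Fin d) →L[ℝ] (EuclideanSpace ℝ (Fin d) →L[ℝ] ℝ) :=
  (2:ℝ) • (innerSL ℝ)

private lemma f_hasFDeriv' {d : ℕ} (w : EuclideanSpace ℝ (Fin d)) (A σ₀ : ℝ) (hσ : σ₀ ≠ 0)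
    (x : EuclideanSpace ℝ (Fin d)) (hx : A^2 + (‖w - x‖^2)^2 ≠ 0) :
    HasFDerivAt (fun y : EuclideanSpace ℝ (Fin d) =>
        (A - ‖w - y‖^2)/(σ₀ * Real.sqrt (A^2 + (‖w - y‖^2)^2)))
      ((-A*(A+‖w - x‖^2)/(σ₀ * Real.sqrt (A^2+(‖w - x‖^2)^2)^3)) •
        ((2:ℝ) • innerSL ℝ (x - w))) x := by
  exact (phi_deriv' A σ₀ hσ _ hx).comp_hasFDerivAt x (normsq_fderiv' w x)

set_option maxHeartbeats 1600000 in
/-- Fix `q, w ∈ ℝ^d`, `σ₀ > 0`, and set, for `p ∈ ℝ^d`, `A = ‖w - q‖²`,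
`B(p) = ‖w - p‖²`, `S(p) = √(A² + B(p)²)`, `f(p) = (A - B(p)) / (σ₀ S(p))`.
At any `p` with `S(p) ≠ 0`, `f` is twice differentiable in `p` and its Hessian
bilinear form satisfies, for all `h, k`:
`D²f(p)[h, k] = (2A/(σ₀ S³)) ((2 T_p / S²) ⟪w - p, h⟫ ⟪w - p, k⟫ - (A + B) ⟪h, k⟫)`
where `T_p = 3 B (A + B) - S²`. -/
theorem stmt18 {d : ℕ} (q w p : EuclideanSpace ℝ (Fin d)) (σ₀ : ℝ) (hσ₀ : 0 < σ₀)
    (f : EuclideanSpace ℝ (Fin d) → ℝ)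
    (hf : ∀ p', f p' =
      (‖w - q‖ ^ 2 - ‖w - p'‖ ^ 2) /
        (σ₀ * Real.sqrt ((‖w - q‖ ^ 2) ^ 2 + (‖w - p'‖ ^ 2) ^ 2)))
    (A B S Tp : ℝ)
    (hA : A = ‖w - q‖ ^ 2) (hB : B = ‖w - p‖ ^ 2)
    (hSdef : S = Real.sqrt (A ^ 2 + B ^ 2)) (hS0 : S ≠ 0)
    (hTp : Tp = 3 * B * (A + B) - S ^ 2) :
    DifferentiableAt ℝ f p ∧
      DifferentiableAt ℝ (fun p' => fderiv ℝ f p') p ∧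
      ∀ h k : EuclideanSpace ℝ (Fin d),
        fderiv ℝ (fun p' => fderiv ℝ f p') p h k =
          2 * A / (σ₀ * S ^ 3) *
            (2 * Tp / S ^ 2 * ⟪w - p, h⟫ * ⟪w - p, k⟫ - (A + B) * ⟪h, k⟫) := by
  have hσ : σ₀ ≠ 0 := ne_of_gt hσ₀
  have hfeq : f = fun y : EuclideanSpace ℝ (Fin d) =>
      (A - ‖w - y‖^2)/(σ₀ * Real.sqrt (A^2 + (‖w - y‖^2)^2)) := by
    funext y; rw [hf y, hA]
  have hAB : A^2 + B^2 ≠ 0 := by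
    intro h0
    apply hS0
    rw [hSdef, h0, Real.sqrt_zero]
  have hABp : A^2 + (‖w - p‖^2)^2 ≠ 0 := by rw [← hB]; exact hAB
  -- first derivative everywhere near p
  have hF1 : ∀ x : EuclideanSpace ℝ (Fin d), A^2 + (‖w - x‖^2)^2 ≠ 0 →
      HasFDerivAt f ((-A*(A+‖w - x‖^2)/(σ₀ * Real.sqrt (A^2+(‖w - x‖^2)^2)^3)) •
        ((2:ℝ) • innerSL ℝ (x - w))) x := by
    intro x hx
    rw [hfeq]
    exact f_hasFDeriv' w A σ₀ hσ x hx
  have hdiff1 : DifferentiableAt ℝ f p := (hF1 p hABp).differentiableAt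
  -- the condition holds eventually
  have hcont : Continuous fun x : EuclideanSpace ℝ (Fin d) => A^2 + (‖w - x‖^2)^2 := by
    continuity
  have hev : ∀ᶠ x in nhds p, A^2 + (‖w - x‖^2)^2 ≠ 0 :=
    hcont.continuousAt.eventually_ne hABp
  set F1 : EuclideanSpace ℝ (Fin d) → (EuclideanSpace ℝ (Fin d) →L[ℝ] ℝ) :=
    fun x => (-A*(A+‖w - x‖^2)/(σ₀ * Real.sqrt (A^2+(‖w - x‖^2)^2)^3)) •
      ((2:ℝ) • innerSL ℝ (x - w)) with hF1def
  have hev2 : (fun p' => fderiv ℝ f p') =ᶠ[nhds p] F1 :=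
    hev.mono fun x hx => (hF1 x hx).fderiv
  -- derivative of F1 at p
  have hc : HasFDerivAt
      (fun x : EuclideanSpace ℝ (Fin d) =>
        -A*(A+‖w - x‖^2)/(σ₀ * Real.sqrt (A^2+(‖w - x‖^2)^2)^3))
      ((A*(3*(‖w - p‖^2)*(A+‖w - p‖^2) - (A^2+(‖w - p‖^2)^2))/
        (σ₀ * Real.sqrt (A^2+(‖w - p‖^2)^2)^5)) • ((2:ℝ) • innerSL ℝ (p - w))) p := by
    exact (phi2_deriv' A σ₀ hσ _ hABp).comp_hasFDerivAt p (normsq_fderiv' w p)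
  have hL : HasFDerivAt (fun x : EuclideanSpace ℝ (Fin d) => (2:ℝ) • innerSL ℝ (x - w))
      (Mmap' d) p := by
    have heq : (fun x : EuclideanSpace ℝ (Fin d) => (2:ℝ) • innerSL ℝ (x - w)) =
        fun x => Mmap' d x - Mmap' d w := by
      funext x; simp [Mmap', map_sub, smul_sub]
    rw [heq]
    exact (Mmap' d).hasFDerivAt.sub_const (Mmap' d w)
  have hF1d : HasFDerivAt F1
      (((-A*(A+‖w - p‖^2)/(σ₀ * Real.sqrt (A^2+(‖w - p‖^2)^2)^3)) • Mmap' d) +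
        ContinuousLinearMap.smulRight
          ((A*(3*(‖w - p‖^2)*(A+‖w - p‖^2) - (A^2+(‖w - p‖^2)^2))/
            (σ₀ * Real.sqrt (A^2+(‖w - p‖^2)^2)^5)) • ((2:ℝ) • innerSL ℝ (p - w)))
          ((2:ℝ) • innerSL ℝ (p - w))) p := hc.smul hL
  have hdiff2 : DifferentiableAt ℝ (fun p' => fderiv ℝ f p') p :=
    hF1d.differentiableAt.congr_of_eventuallyEq hev2
  refine ⟨hdiff1, hdiff2, ?_⟩
  intro h k
  have heq2 : fderiv ℝ (fun p' => fderiv ℝ f p') p = fderiv ℝ F1 p := hev2.fderiv_eq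
  rw [heq2, hF1d.fderiv]
  have hS2 : S^2 = A^2 + B^2 := by rw [hSdef]; exact Real.sq_sqrt (by positivity)
  have hSs : Real.sqrt (A^2 + (‖w - p‖^2)^2) = S := by rw [← hB, hSdef]
  simp only [ContinuousLinearMap.add_apply, ContinuousLinearMap.smul_apply,
    ContinuousLinearMap.smulRight_apply, Mmap', innerSL_apply_apply, smul_eq_mul, hSs, ← hB]
  have hip : ∀ v : EuclideanSpace ℝ (Fin d), ⟪p - w, v⟫ = -⟪w - p, v⟫ := by
    intro v; rw [← neg_sub w p, inner_neg_left]
  have hSnn : 0 ≤ S := hSdef ▸ Real.sqrt_nonneg _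
  rw [hip h, hip k, hTp, ← hS2]
  simp only [Real.sqrt_sq hSnn]
  erw [innerSL_apply_apply]
  field_simp
  ring
end

section
/- Fix w in the Euclidean space ℝ^d and σ₀ > 0, and define, for (p, q) ∈ ℝ^d × ℝ^d, A = ‖w − q‖², B = ‖w − p‖², S = √(A² + B²), and f(p, q) = (A − B)/(σ₀·S). At any point (p, q) where S ≠ 0, the mixed second derivative of f satisfies, for all h, k ∈ ℝ^d: D_q(D_p f)(p, q)[h, k] = (4·T_{pq}/(σ₀·S⁵))·⟪w − p, h⟫·⟪w − q, k⟫, where T_{pq} = 3·A²·(A + B) − S²·(2A + B). -/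
open scoped RealInnerProductSpace

section aux

variable {d : ℕ}

lemma core_fderiv (v x : EuclideanSpace ℝ (Fin d)) :
    HasFDerivAt (fun y : EuclideanSpace ℝ (Fin d) => ‖v - y‖ ^ 2)
      ((-2 : ℝ) • (innerSL ℝ (v - x))) x := by
  have h1 : HasFDerivAt (fun y : EuclideanSpace ℝ (Fin d) => v - y)
      (-(ContinuousLinearMap.id ℝ (EuclideanSpace ℝ (Fin d)))) x :=
    (hasFDerivAt_id x).const_sub v
  have h2 := h1.inner ℝ h1
  have h3 : (fun y : EuclideanSpace ℝ (Fin d) => ⟪v - y, v - y⟫)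
      = fun y : EuclideanSpace ℝ (Fin d) => ‖v - y‖ ^ 2 := by
    funext y; rw [real_inner_self_eq_norm_sq]
  rw [h3] at h2
  refine h2.congr_fderiv (Eq.symm ?_)
  ext z
  simp only [ContinuousLinearMap.smul_apply, ContinuousLinearMap.coe_comp', Function.comp_apply,
    ContinuousLinearMap.prod_apply, ContinuousLinearMap.neg_apply, ContinuousLinearMap.coe_id',
    id_eq, fderivInnerCLM_apply, innerSL_apply_apply, smul_eq_mul, inner_neg_left, inner_neg_right]
  rw [real_inner_comm]
  ring

lemma L1 (a B σ₀ : ℝ) (hσ₀ : 0 < σ₀) (hne : a ^ 2 + B ^ 2 ≠ 0) :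
    HasDerivAt (fun t : ℝ => (a - t) / (σ₀ * Real.sqrt (a ^ 2 + t ^ 2)))
      (-(a * (a + B)) / (σ₀ * Real.sqrt (a ^ 2 + B ^ 2) ^ 3)) B := by
  have hpos : (0:ℝ) < a ^ 2 + B ^ 2 := lt_of_le_of_ne (by positivity) (Ne.symm hne)
  set s := Real.sqrt (a ^ 2 + B ^ 2) with hs_def
  have hs : 0 < s := Real.sqrt_pos.2 hpos
  have hs2 : s ^ 2 = a ^ 2 + B ^ 2 := Real.sq_sqrt hpos.le
  have h1 : HasDerivAt (fun t : ℝ => a - t) (-1) B := (hasDerivAt_id B).const_sub a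
  have h2 : HasDerivAt (fun t : ℝ => a ^ 2 + t ^ 2) ((2:ℕ) * B ^ 1) B :=
    (hasDerivAt_pow 2 B).const_add (a ^ 2)
  have h3 := h2.sqrt hne
  have h4 := h3.const_mul σ₀
  have h5 := h1.div h4 (by positivity)
  refine h5.congr_deriv (Eq.symm ?_)
  rw [← hs_def]
  field_simp
  linear_combination 2 * hs2

lemma L2 (A B σ₀ : ℝ) (hσ₀ : 0 < σ₀) (hne : A ^ 2 + B ^ 2 ≠ 0) :
    HasDerivAt (fun t : ℝ => 2 * t * (t + B) / (σ₀ * Real.sqrt (t ^ 2 + B ^ 2) ^ 3))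
      (-2 * (3 * A ^ 2 * (A + B) - (A ^ 2 + B ^ 2) * (2 * A + B)) /
        (σ₀ * Real.sqrt (A ^ 2 + B ^ 2) ^ 5)) A := by
  have hpos : (0:ℝ) < A ^ 2 + B ^ 2 := lt_of_le_of_ne (by positivity) (Ne.symm hne)
  set s := Real.sqrt (A ^ 2 + B ^ 2) with hs_def
  have hs : 0 < s := Real.sqrt_pos.2 hpos
  have hs2 : s ^ 2 = A ^ 2 + B ^ 2 := Real.sq_sqrt hpos.le
  have h1 := ((hasDerivAt_id A).const_mul 2).mul ((hasDerivAt_id A).add_const B)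
  have h2 : HasDerivAt (fun t : ℝ => t ^ 2 + B ^ 2) ((2:ℕ) * A ^ 1) A :=
    (hasDerivAt_pow 2 A).add_const (B ^ 2)
  have h3 := (h2.sqrt hne).pow 3
  have h4 := h3.const_mul σ₀
  have h5 := h1.div h4 (by simp only [Pi.pow_apply]; rw [← hs_def]; exact mul_ne_zero hσ₀.ne' (pow_ne_zero 3 hs.ne'))
  refine h5.congr_deriv (Eq.symm ?_)
  simp only [Pi.pow_apply, Pi.mul_apply, id]
  rw [← hs_def]
  field_simp
  linear_combination (-(s ^ 2 * (4 * A + 2 * B))) * hs2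

end aux

lemma inner_fderiv (w p : EuclideanSpace ℝ (Fin d)) (σ₀ : ℝ) (hσ₀ : 0 < σ₀) (a : ℝ)
    (hne : a ^ 2 + (‖w - p‖ ^ 2) ^ 2 ≠ 0) :
    HasFDerivAt (fun p' => (a - ‖w - p'‖ ^ 2) /
        (σ₀ * Real.sqrt (a ^ 2 + (‖w - p'‖ ^ 2) ^ 2)))
      ((2 * a * (a + ‖w - p‖ ^ 2) /
        (σ₀ * Real.sqrt (a ^ 2 + (‖w - p‖ ^ 2) ^ 2) ^ 3)) • innerSL ℝ (w - p)) p := by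
  have key := (L1 a (‖w - p‖ ^ 2) σ₀ hσ₀ hne).comp_hasFDerivAt p (core_fderiv w p)
  simp only [Function.comp_def] at key
  rw [smul_smul] at key
  refine key.congr_fderiv (Eq.symm ?_)
  congr 1
  ring

/-- Fix `w ∈ ℝ^d`, `σ₀ > 0`, and set, for `(p, q) ∈ ℝ^d × ℝ^d`, `A = ‖w - q‖²`,
`B = ‖w - p‖²`, `S = √(A² + B²)`, `f(p, q) = (A - B) / (σ₀ S)`. At any `(p, q)` with
`S ≠ 0`, the mixed second derivative of `f` (first in `p`, then in `q`) satisfies,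
for all `h, k`:
`D_q(D_p f)(p, q)[h, k] = (4 T_{pq} / (σ₀ S⁵)) ⟪w - p, h⟫ ⟪w - q, k⟫`
where `T_{pq} = 3 A² (A + B) - S² (2A + B)`. -/
theorem stmt19 {d : ℕ} (w : EuclideanSpace ℝ (Fin d)) (σ₀ : ℝ) (hσ₀ : 0 < σ₀)
    (f : EuclideanSpace ℝ (Fin d) → EuclideanSpace ℝ (Fin d) → ℝ)
    (hf : ∀ p' q', f p' q' =
      (‖w - q'‖ ^ 2 - ‖w - p'‖ ^ 2) /
        (σ₀ * Real.sqrt ((‖w - q'‖ ^ 2) ^ 2 + (‖w - p'‖ ^ 2) ^ 2)))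
    (p q : EuclideanSpace ℝ (Fin d)) (A B S Tpq : ℝ)
    (hA : A = ‖w - q‖ ^ 2) (hB : B = ‖w - p‖ ^ 2)
    (hSdef : S = Real.sqrt (A ^ 2 + B ^ 2)) (hS0 : S ≠ 0)
    (hTpq : Tpq = 3 * A ^ 2 * (A + B) - S ^ 2 * (2 * A + B)) :
    ∀ h k : EuclideanSpace ℝ (Fin d),
      fderiv ℝ (fun q' => fderiv ℝ (fun p' => f p' q') p) q k h =
        4 * Tpq / (σ₀ * S ^ 5) * ⟪w - p, h⟫ * ⟪w - q, k⟫ := by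
  intro h k
  subst hTpq hSdef hA hB
  have hne : (‖w - q‖ ^ 2) ^ 2 + (‖w - p‖ ^ 2) ^ 2 ≠ 0 := by
    intro h0
    exact hS0 (by rw [h0, Real.sqrt_zero])
  have hcont : ContinuousAt
      (fun q' : EuclideanSpace ℝ (Fin d) => (‖w - q'‖ ^ 2) ^ 2 + (‖w - p‖ ^ 2) ^ 2) q := by
    fun_prop
  have hev0 : ∀ᶠ q' in nhds q, (‖w - q'‖ ^ 2) ^ 2 + (‖w - p‖ ^ 2) ^ 2 ≠ 0 :=
    hcont.eventually_ne hne
  have hev : (fun q' => fderiv ℝ (fun p' => f p' q') p) =ᶠ[nhds q]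
      (fun q' => (2 * ‖w - q'‖ ^ 2 * (‖w - q'‖ ^ 2 + ‖w - p‖ ^ 2) /
        (σ₀ * Real.sqrt ((‖w - q'‖ ^ 2) ^ 2 + (‖w - p‖ ^ 2) ^ 2) ^ 3)) •
          innerSL ℝ (w - p)) := by
    filter_upwards [hev0] with q' hq'
    have heq : (fun p' => f p' q') = (fun p' => (‖w - q'‖ ^ 2 - ‖w - p'‖ ^ 2) /
        (σ₀ * Real.sqrt ((‖w - q'‖ ^ 2) ^ 2 + (‖w - p'‖ ^ 2) ^ 2))) :=
      funext fun p' => hf p' q'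
    rw [heq]
    exact (inner_fderiv w p σ₀ hσ₀ (‖w - q'‖ ^ 2) hq').fderiv
  rw [hev.fderiv_eq]
  have hc := (L2 (‖w - q‖ ^ 2) (‖w - p‖ ^ 2) σ₀ hσ₀ hne).comp_hasFDerivAt q (core_fderiv w q)
  simp only [Function.comp_def] at hc
  have hG := hc.smul_const (innerSL ℝ (w - p))
  rw [hG.fderiv]
  simp only [ContinuousLinearMap.smulRight_apply, ContinuousLinearMap.smul_apply,
    innerSL_apply_apply, smul_eq_mul]
  rw [Real.sq_sqrt (by positivity : (0:ℝ) ≤ (‖w - q‖ ^ 2) ^ 2 + (‖w - p‖ ^ 2) ^ 2)]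
  ring
end
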